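/- A group H is generically embeddable if and only if H is countable and every finitely generated subgroup of H is generically embeddable. -/

import Mathlib

/-- The set of group multiplication tables on `ℕ` with identity `0`. -/
def GroupTables : Set (ℕ × ℕ → ℕ) :=
  {m | (∀ a b c : ℕ, m (m (a, b), c) = m (a, m (b, c))) ∧
       (∀ a : ℕ, m (a, 0) = a) ∧
       (∀ a : ℕ, m (0, a) = a) ∧
       (∀ a : ℕ, ∃ b : ℕ, m (a, b) = 0 ∧ m (b, a) = 0)}

/-- The carrier of the group `Ḡ` associated to a table `G ∈ 𝒢` (a copy of `ℕ`). -/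
def Carrier (_G : ↥GroupTables) : Type := ℕ

noncomputable instance instGroupCarrier (G : ↥GroupTables) : Group (Carrier G) where
  mul a b := G.1 (a, b)
  one := (0 : ℕ)
  inv a := Classical.choose (G.2.2.2.2 a)
  mul_assoc a b c := G.2.1 a b c
  one_mul a := G.2.2.2.1 a
  mul_one a := G.2.2.1 a
  inv_mul_cancel a := (Classical.choose_spec (G.2.2.2.2 a)).2

/-- Inclusion of `ℕ` into the carrier of `Ḡ`. -/
def toC (G : ↥GroupTables) (n : ℕ) : Carrier G := n

/-- Projection of the carrier of `Ḡ` back to `ℕ`. -/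
def fromC (G : ↥GroupTables) (x : Carrier G) : ℕ := x

/-- A group `H` is generically embeddable if
`E_H = {G ∈ 𝒢 : H embeds into Ḡ}` is comeager in `𝒢`. -/
def GenericallyEmbeddable (H : Type*) [Group H] : Prop :=
  {G : ↥GroupTables | ∃ f : H →* Carrier G, Function.Injective f} ∈ residual ↥GroupTables

/-!
A comeager subset of the Polish space `𝒢` is nonempty, so a generically embeddable group embeds
into some `Ḡ` and is countable; and `E_H ⊆ E_K` whenever `K` embeds into `H`.

Conversely, write `H` as the union of a chain `K₀ ≤ K₁ ≤ ⋯` of finitely generated subgroups. For a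
finitely generated `K`, it is generic that any two embeddings `K → Ḡ` are conjugate: the two
embeddings are determined by the images of finitely many generators, and near any table in which
both given tuples of images occur, the HNN extension of `Ḡ` conjugating one embedding into the
other can be re-encoded on `ℕ` without changing finitely many prescribed entries. In a table where
every `K n` embeds and all embeddings of each `K n` are conjugate, every embedding of `K n` can be
conjugated into one extending to `K (n + 1)`, and the union of these embeddings embeds `H`.
-/

open Function Set Topology Filter

theorem continuous_eval_of_discreteTopology {ι α : Type*} [TopologicalSpace ι]
    [DiscreteTopology ι] [TopologicalSpace α] : Continuous fun q : (ι → α) × ι => q.1 q.2 :=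
  continuous_prod_of_discrete_right.mpr continuous_apply

section Cylinders

variable {ι α : Type*} [TopologicalSpace α] [DiscreteTopology α] {S : Set (ι → α)}

theorem isOpen_iff_forall_exists_eqOn {U : Set S} :
    IsOpen U ↔ ∀ f ∈ U, ∃ s : Finset ι, ∀ g : S, EqOn g.1 f.1 s → g ∈ U := by
  constructor
  · intro hU f hf
    obtain ⟨V, hV, rfl⟩ := isOpen_induced_iff.mp hU
    obtain ⟨I, u, hu, hIu⟩ := isOpen_pi_iff.mp hV f.1 hf
    exact ⟨I, fun g hg => hIu fun z hz => (hg hz).symm ▸ (hu z hz).2⟩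
  · refine fun h => isOpen_iff_mem_nhds.mpr fun f hf => ?_
    obtain ⟨s, hs⟩ := h f hf
    have hz : ∀ z, (fun g : S => g.1 z) ⁻¹' {f.1 z} ∈ 𝓝 f := fun z =>
      ((continuous_apply z).comp continuous_subtype_val).continuousAt.preimage_mem_nhds
        (mem_nhds_discrete.mpr rfl)
    exact mem_of_superset ((biInter_finset_mem s).mpr fun z _ => hz z)
      fun g hg => hs g fun z hz => mem_iInter₂.mp hg z hz

theorem setOf_imp_mem_residual {X : Type*} [TopologicalSpace X] {P Q : Set X} (hQ : IsOpen Q)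
    (h : ∀ U, IsOpen U → (U ∩ P).Nonempty → (U ∩ Q).Nonempty) :
    {x | x ∈ P → x ∈ Q} ∈ residual X := by
  have hdense : Dense (Q ∪ interior Pᶜ) := by
    refine dense_iff_inter_open.mpr fun U hU hne => ?_
    by_cases hP : (U ∩ P).Nonempty
    · obtain ⟨x, hxU, hxQ⟩ := h U hU hP
      exact ⟨x, hxU, Or.inl hxQ⟩
    · obtain ⟨x, hx⟩ := hne
      exact ⟨x, hx, Or.inr (interior_maximal (fun y hy hyP => hP ⟨y, hy, hyP⟩) hU hx)⟩
  refine mem_of_superset (residual_of_dense_open (hQ.union isOpen_interior) hdense) ?_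
  rintro x (hx | hx) hxP
  · exact hx
  · exact absurd hxP (interior_subset hx)

theorem setOf_imp_mem_residual_of_forall_eqOn {P Q : Set S} (hQ : IsOpen Q)
    (h : ∀ f ∈ P, ∀ s : Finset ι, ∃ g ∈ Q, EqOn g.1 f.1 s) :
    {f | f ∈ P → f ∈ Q} ∈ residual S := by
  refine setOf_imp_mem_residual hQ fun U hU ⟨f, hfU, hfP⟩ => ?_
  obtain ⟨s, hs⟩ := isOpen_iff_forall_exists_eqOn.mp hU f hfU
  obtain ⟨g, hgQ, hgf⟩ := h f hfP s
  exact ⟨g, hs g hgf, hgQ⟩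

end Cylinders

instance {G : Type*} [Group G] [Countable G] (A B : Subgroup G) (φ : A ≃* B) :
    Countable (HNNExtension G A B φ) := by
  have : Countable (Monoid.Coprod G (Multiplicative ℤ)) := by
    delta Monoid.Coprod
    exact inferInstanceAs (Countable (Quotient _))
  delta HNNExtension
  exact inferInstanceAs (Countable (Quotient _))

universe u

theorem exists_countable_conj_extension {K : Type*} {L : Type u} [Group K] [Group L]
    [Countable L] {χ ψ : K →* L} (hχ : Injective χ) (hψ : Injective ψ) :
    ∃ (M : Type u) (_ : Group M) (_ : Countable M) (j : L →* M) (t : M),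
      Injective j ∧ ∀ k, t * j (χ k) = j (ψ k) * t := by
  let θ : χ.range ≃* ψ.range :=
    (MonoidHom.ofInjective hχ).symm.trans (MonoidHom.ofInjective hψ)
  refine ⟨HNNExtension L χ.range ψ.range θ, inferInstance, inferInstance, HNNExtension.of,
    HNNExtension.t, HNNExtension.of_injective θ, fun k => ?_⟩
  have hθ : θ ⟨χ k, k, rfl⟩ = ⟨ψ k, k, rfl⟩ := by
    have hχk : MonoidHom.ofInjective hχ k = ⟨χ k, k, rfl⟩ :=
      Subtype.ext (MonoidHom.ofInjective_apply hχ)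
    simp only [θ, MulEquiv.trans_apply, ← hχk, MulEquiv.symm_apply_apply]
    exact Subtype.ext (MonoidHom.ofInjective_apply hψ)
  simpa only [hθ] using HNNExtension.t_mul_of (φ := θ) ⟨χ k, k, rfl⟩

def EmbeddingsConjugate (K L : Type*) [Group K] [Group L] : Prop :=
  ∀ χ ψ : K →* L, Injective χ → Injective ψ → ∃ t : L, ∀ k, t * χ k * t⁻¹ = ψ k

section Chains

variable {H L : Type*} [Group H] [Group L]

theorem exists_comp_eq_of_embeddingsConjugate {K K' : Type*} [Group K] [Group K']
    {ι : K →* K'} (hι : Injective ι) (hconj : EmbeddingsConjugate K L) {χ : K' →* L}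
    (hχ : Injective χ) {f : K →* L} (hf : Injective f) :
    ∃ g : K' →* L, Injective g ∧ g.comp ι = f := by
  obtain ⟨t, ht⟩ := hconj (χ.comp ι) f (hχ.comp hι) hf
  exact ⟨(MulAut.conj t).toMonoidHom.comp χ, (MulAut.conj t).injective.comp hχ,
    MonoidHom.ext ht⟩

theorem Subgroup.exists_monoidHom_eq_of_monotone {ι : Type*} [Preorder ι]
    [IsDirected ι (· ≤ ·)] {K : ι → Subgroup H} (hK : Monotone K) (hcover : ∀ a, ∃ i, a ∈ K i)
    (f : ∀ i, K i →* L)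
    (hf : ∀ i j (hij : i ≤ j), (f j).comp (Subgroup.inclusion (hK hij)) = f i) :
    ∃ F : H →* L, ∀ i (k : K i), F k = f i k := by
  choose idx hidx using hcover
  have key : ∀ i a (ha : a ∈ K i), f i ⟨a, ha⟩ = f (idx a) ⟨a, hidx a⟩ := by
    intro i a ha
    obtain ⟨j, hij, hj⟩ := directed_of (· ≤ ·) i (idx a)
    rw [← hf i j hij, ← hf (idx a) j hj]
    rfl
  refine ⟨{ toFun a := f (idx a) ⟨a, hidx a⟩, map_one' := map_one _, map_mul' a b := ?_ },
    fun i k => (key i k k.2).symm⟩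
  obtain ⟨j, haj, hbj⟩ := directed_of (· ≤ ·) (idx a) (idx b)
  have ha := hK haj (hidx a)
  have hb := hK hbj (hidx b)
  simp only [← key j _ ha, ← key j _ hb, ← key j _ (mul_mem ha hb)]
  exact map_mul (f j) ⟨a, ha⟩ ⟨b, hb⟩

theorem exists_injective_of_extension_chain {K : ℕ → Subgroup H} (hK : Monotone K)
    (hcover : ∀ a, ∃ n, a ∈ K n) (h₀ : ∃ f : K 0 →* L, Injective f)
    (hext : ∀ n (f : K n →* L), Injective f →
      ∃ g : K (n + 1) →* L, Injective g ∧ g.comp (Subgroup.inclusion (hK n.le_succ)) = f) :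
    ∃ F : H →* L, Injective F := by
  choose ext hext_inj hext_comp using hext
  let f : ∀ n, {f : K n →* L // Injective f} := fun n =>
    Nat.rec ⟨h₀.choose, h₀.choose_spec⟩ (fun n g => ⟨ext n g.1 g.2, hext_inj n g.1 g.2⟩) n
  have hf : ∀ n m (hnm : n ≤ m), (f m).1.comp (Subgroup.inclusion (hK hnm)) = (f n).1 := by
    intro n m hnm
    induction m, hnm using Nat.le_induction with
    | base => rfl
    | succ m hnm ih => rw [← ih, ← hext_comp m (f m).1 (f m).2]; rfl
  obtain ⟨F, hF⟩ := Subgroup.exists_monoidHom_eq_of_monotone hK hcover (fun n => (f n).1) hf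
  refine ⟨F, fun a b hab => ?_⟩
  obtain ⟨n, ha, hb⟩ : ∃ n, a ∈ K n ∧ b ∈ K n := by
    obtain ⟨m, ha⟩ := hcover a
    obtain ⟨m', hb⟩ := hcover b
    exact ⟨max m m', hK (le_max_left _ _) ha, hK (le_max_right _ _) hb⟩
  exact congrArg Subtype.val
    ((f n).2 ((hF n ⟨a, ha⟩).symm.trans (hab.trans (hF n ⟨b, hb⟩))))

end Chains

theorem exists_monotone_fg_of_countable (H : Type*) [Group H] [Countable H] :
    ∃ K : ℕ → Subgroup H, Monotone K ∧ (∀ n, (K n).FG) ∧ ∀ a, ∃ n, a ∈ K n := by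
  obtain ⟨h, hh⟩ := exists_surjective_nat H
  refine ⟨fun n => Subgroup.closure (h '' Iic n),
    fun m n hmn => Subgroup.closure_mono (image_mono (Iic_subset_Iic.mpr hmn)),
    fun n => (Subgroup.fg_iff _).mpr ⟨_, rfl, (finite_Iic n).image h⟩, fun a => ?_⟩
  obtain ⟨n, rfl⟩ := hh a
  exact ⟨n, Subgroup.subset_closure (mem_image_of_mem h self_mem_Iic)⟩

namespace GroupTables

instance (G : ↥GroupTables) : Countable (Carrier G) := inferInstanceAs (Countable ℕ)

section OfEquiv

variable {M : Type*} [Group M]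

theorem equiv_mul_mem (e : ℕ ≃ M) (he : e 0 = 1) :
    (fun z : ℕ × ℕ => e.symm (e z.1 * e z.2)) ∈ GroupTables := by
  refine ⟨fun _ _ _ => by simp [mul_assoc], fun _ => by simp [he], fun _ => by simp [he],
    fun a => ⟨e.symm (e a)⁻¹, ?_, ?_⟩⟩ <;> simp [← he]

def ofEquiv (e : ℕ ≃ M) (he : e 0 = 1) : ↥GroupTables := ⟨_, equiv_mul_mem e he⟩

def mulEquivOfEquiv (e : ℕ ≃ M) (he : e 0 = 1) : Carrier (ofEquiv e he) ≃* M where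
  toEquiv := e
  map_mul' _ _ := e.apply_symm_apply _

end OfEquiv

instance : Nonempty ↥GroupTables := by
  obtain ⟨e⟩ : Nonempty (ℕ ≃ Multiplicative ℤ) := nonempty_equiv_of_countable
  exact ⟨ofEquiv (e.trans (Equiv.swap (e 0) 1)) (Equiv.swap_apply_left _ _)⟩

noncomputable def inv (G : ↥GroupTables) (a : ℕ) : ℕ := fromC G (toC G a)⁻¹

theorem inv_eq_of_mul_eq_zero {G : ↥GroupTables} {a b : ℕ} (h : G.1 (a, b) = 0) :
    inv G a = b :=
  inv_eq_of_mul_eq_one_right (a := toC G a) (b := toC G b) h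

theorem mul_inv_eq_zero (G : ↥GroupTables) (a : ℕ) : G.1 (a, inv G a) = 0 :=
  mul_inv_cancel (toC G a)

theorem inv_mul_eq_zero (G : ↥GroupTables) (a : ℕ) : G.1 (inv G a, a) = 0 :=
  inv_mul_cancel (toC G a)

theorem continuous_inv_apply (a : ℕ) : Continuous fun G : ↥GroupTables => inv G a := by
  refine continuous_discrete_rng.mpr fun b => isOpen_iff_forall_exists_eqOn.mpr fun G hG => ?_
  refine ⟨{(a, inv G a)}, fun G' hG' => ?_⟩
  rw [mem_preimage, inv_eq_of_mul_eq_zero ((hG' (by simp)).trans (mul_inv_eq_zero G a))]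
  exact hG

-- Existence of inverses is not a closed condition on the table alone; it becomes one once the
-- inverse function is recorded alongside.
theorem isClosedEmbedding_graph_inv :
    IsClosedEmbedding fun G : ↥GroupTables => (G.1, inv G) := by
  have hcont : Continuous fun G : ↥GroupTables => (G.1, inv G) :=
    continuous_subtype_val.prodMk (continuous_pi continuous_inv_apply)
  refine ⟨⟨.of_comp hcont continuous_fst .subtypeVal,
    fun G G' h => Subtype.ext (congrArg Prod.fst h)⟩, ?_⟩
  have hrange : range (fun G : ↥GroupTables => (G.1, inv G)) =
      {p : (ℕ × ℕ → ℕ) × (ℕ → ℕ) |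
        (∀ a b c : ℕ, p.1 (p.1 (a, b), c) = p.1 (a, p.1 (b, c))) ∧
        (∀ a : ℕ, p.1 (a, 0) = a) ∧ (∀ a : ℕ, p.1 (0, a) = a) ∧
        (∀ a : ℕ, p.1 (a, p.2 a) = 0) ∧ ∀ a : ℕ, p.1 (p.2 a, a) = 0} := by
    ext ⟨m, i⟩
    constructor
    · rintro ⟨G, hG⟩
      cases hG
      exact ⟨G.2.1, G.2.2.1, G.2.2.2.1, mul_inv_eq_zero G, inv_mul_eq_zero G⟩
    · rintro ⟨h₁, h₂, h₃, h₄, h₅⟩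
      let G : ↥GroupTables := ⟨m, h₁, h₂, h₃, fun a => ⟨i a, h₄ a, h₅ a⟩⟩
      exact ⟨G, Prod.ext rfl (funext fun a => inv_eq_of_mul_eq_zero (G := G) (h₄ a))⟩
  -- picked up by `fun_prop` for the entries at table-dependent indices
  have ev : ∀ {u : (ℕ × ℕ → ℕ) × (ℕ → ℕ) → ℕ × ℕ}, Continuous u →
      Continuous fun p : (ℕ × ℕ → ℕ) × (ℕ → ℕ) => p.1 (u p) :=
    fun hu => continuous_eval_of_discreteTopology.comp (continuous_fst.prodMk hu)
  rw [hrange]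
  simp only [ofPred_and, ofPred_forall]
  repeat' first | apply IsClosed.inter | apply isClosed_iInter; intro
  all_goals exact isClosed_eq (by fun_prop) (by fun_prop)

instance : PolishSpace ↥GroupTables := isClosedEmbedding_graph_inv.polishSpace

theorem toC_injective (G : ↥GroupTables) : Injective (toC G) := fun _ _ h => h

@[simp]
theorem toC_fromC (G : ↥GroupTables) (x : Carrier G) : toC G (fromC G x) = x := rfl

theorem exists_mulEquiv_eqOn (G : ↥GroupTables) {M : Type*} [Group M] [Countable M]
    {j : Carrier G →* M} (hj : Injective j) (s : Finset (ℕ × ℕ)) (F : Finset ℕ) :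
    ∃ (G' : ↥GroupTables) (φ : Carrier G' ≃* M),
      EqOn G'.1 G.1 s ∧ ∀ k ∈ F, φ (toC G' k) = j (toC G k) := by
  classical
  let F' : Finset ℕ := insert 0 (F ∪ s.biUnion fun z => {z.1, z.2, G.1 z})
  have : Infinite M := .of_injective (fun n => j (toC G n)) (hj.comp (toC_injective G))
  obtain ⟨e, he⟩ := Cardinal.extend_function_of_lt (s := (F' : Set ℕ))
    ⟨fun n => j (toC G n), hj.comp ((toC_injective G).comp Subtype.val_injective)⟩
    (by simp) nonempty_equiv_of_countable
  have heF : ∀ n ∈ F', e n = j (toC G n) := fun n hn => he ⟨n, hn⟩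
  have he0 : e 0 = 1 := (heF 0 (by simp [F'])).trans (map_one j)
  refine ⟨ofEquiv e he0, mulEquivOfEquiv e he0, fun z hz => ?_,
    fun k hk => heF k (by simp [F', hk])⟩
  have hzF : ∀ n ∈ ({z.1, z.2, G.1 z} : Finset ℕ), n ∈ F' := fun n hn =>
    Finset.mem_insert_of_mem (Finset.mem_union_right _ (Finset.mem_biUnion.mpr ⟨z, hz, hn⟩))
  show e.symm (e z.1 * e z.2) = G.1 z
  rw [heF z.1 (hzF _ (by simp)), heF z.2 (hzF _ (by simp)), ← map_mul, Equiv.symm_apply_eq,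
    heF _ (hzF _ (by simp))]
  rfl

theorem isOpen_setOf_exists_conj {ι : Type*} [Fintype ι] (x y : ι → ℕ) :
    IsOpen {G : ↥GroupTables |
      ∃ t : ℕ, ∀ i, toC G t * toC G (x i) = toC G (y i) * toC G t} := by
  classical
  refine isOpen_iff_forall_exists_eqOn.mpr fun G ⟨t, ht⟩ => ?_
  refine ⟨Finset.univ.image (fun i => (t, x i)) ∪ Finset.univ.image (fun i => (y i, t)),
    fun G' hG' => ⟨t, fun i => ?_⟩⟩
  show G'.1 (t, x i) = G'.1 (y i, t)
  exact (hG' (x := (t, x i)) (by simp)).trans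
    ((ht i).trans (hG' (x := (y i, t)) (by simp)).symm)

theorem conj_of_embeddings_mem_residual {K ι : Type*} [Group K] [Fintype ι] (g : ι → K)
    (x y : ι → ℕ) :
    {G : ↥GroupTables |
      (∃ χ : K →* Carrier G, Injective χ ∧ ∀ i, χ (g i) = toC G (x i)) ∧
        (∃ ψ : K →* Carrier G, Injective ψ ∧ ∀ i, ψ (g i) = toC G (y i)) →
      ∃ t : ℕ, ∀ i, toC G t * toC G (x i) = toC G (y i) * toC G t} ∈ residual ↥GroupTables := by
  refine setOf_imp_mem_residual_of_forall_eqOn (isOpen_setOf_exists_conj x y) ?_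
  rintro G ⟨⟨χ, hχ, hχg⟩, ⟨ψ, hψ, hψg⟩⟩ s
  obtain ⟨M, _, _, j, t, hj, ht⟩ := exists_countable_conj_extension hχ hψ
  obtain ⟨G', φ, hG's, hφ⟩ :=
    exists_mulEquiv_eqOn G hj s (Finset.univ.image x ∪ Finset.univ.image y)
  refine ⟨G', ⟨fromC G' (φ.symm t), fun i => φ.injective ?_⟩, hG's⟩
  simp [map_mul, hφ, ← hχg, ← hψg, ht]

theorem embeddingsConjugate_mem_residual (K : Type*) [Group K] [Group.FG K] :
    {G : ↥GroupTables | EmbeddingsConjugate K (Carrier G)} ∈ residual ↥GroupTables := by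
  obtain ⟨S, hS⟩ := Group.FG.out (G := K)
  filter_upwards [eventually_countable_forall.mpr fun p : (S → ℕ) × (S → ℕ) =>
    conj_of_embeddings_mem_residual (Subtype.val : S → K) p.1 p.2] with G hG χ ψ hχ hψ
  obtain ⟨t, ht⟩ := hG (fun i => fromC G (χ i), fun i => fromC G (ψ i))
    ⟨⟨χ, hχ, fun _ => rfl⟩, ⟨ψ, hψ, fun _ => rfl⟩⟩
  have hconj : (MulAut.conj (toC G t)).toMonoidHom.comp χ = ψ :=
    MonoidHom.eq_of_eqOn_dense hS fun k hk => by simpa using mul_inv_eq_of_eq_mul (ht ⟨k, hk⟩)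
  exact ⟨toC G t, DFunLike.congr_fun hconj⟩

end GroupTables

namespace GenericallyEmbeddable

variable {H : Type*} [Group H]

theorem countable (hH : GenericallyEmbeddable H) : Countable H := by
  obtain ⟨G, f, hf⟩ := (dense_of_mem_residual hH).nonempty
  exact hf.countable

theorem of_injective (hH : GenericallyEmbeddable H) {K : Type*} [Group K] {ι : K →* H}
    (hι : Injective ι) : GenericallyEmbeddable K :=
  mem_of_superset hH fun _ ⟨f, hf⟩ => ⟨f.comp ι, hf.comp hι⟩

end GenericallyEmbeddable

/-- A group `H` is generically embeddable if and only if `H` is countable and every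
finitely generated subgroup of `H` is generically embeddable. -/
theorem genericallyEmbeddable_iff_fg (H : Type*) [Group H] :
    GenericallyEmbeddable H ↔
      Countable H ∧ ∀ K : Subgroup H, K.FG → GenericallyEmbeddable K := by
  refine ⟨fun hH => ⟨hH.countable, fun K _ => hH.of_injective K.subtype_injective⟩, ?_⟩
  rintro ⟨hH, hfg⟩
  obtain ⟨K, hK, hKfg, hcover⟩ := exists_monotone_fg_of_countable H
  have hconj (n : ℕ) :
      {G : ↥GroupTables | EmbeddingsConjugate (K n) (Carrier G)} ∈ residual _ :=
    have : Group.FG (K n) := (Group.fg_iff_subgroup_fg _).mpr (hKfg n)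
    GroupTables.embeddingsConjugate_mem_residual (K n)
  filter_upwards [eventually_countable_forall.mpr fun n => hfg (K n) (hKfg n),
    eventually_countable_forall.mpr hconj] with G hE hC
  refine exists_injective_of_extension_chain hK hcover (hE 0) fun n f hf => ?_
  obtain ⟨χ, hχ⟩ := hE (n + 1)
  exact exists_comp_eq_of_embeddingsConjugate (Subgroup.inclusion_injective _) (hC n) hχ hf
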